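/- arXiv:1303.4956 — 4 statements merged into one kernel-verified Lean document; each statement's English description precedes it below -/
import Mathlib

section
/- Let H be a real n×m matrix of rank m, let R_x and R_n be positive definite m×m and n×n matrices respectively, let ε > 0, and let R_y = H R_x Hᵀ + ε R_n. Then (Hᵀ R_y⁻¹ H)⁻¹ = ε (Hᵀ R_n⁻¹ H)⁻¹ + R_x. -/
namespace Matrix

variable {K m n : Type*}

theorem mulVec_injective_of_rank_eq_card [Fintype n] [Field K] (A : Matrix m n K)
    (hA : A.rank = Fintype.card n) : Function.Injective A.mulVec := by
  have hker : Module.finrank K (LinearMap.ker A.mulVecLin) = 0 := by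
    have h := LinearMap.finrank_range_add_finrank_ker A.mulVecLin
    rw [← rank, hA, Module.finrank_fintype_fun_eq_card] at h
    omega
  exact LinearMap.ker_eq_bot.mp (Submodule.finrank_eq_zero.mp hker)

/-- With `S = G Rn⁻¹ H`, the identity `G Ry⁻¹ Ry Rn⁻¹ H = S` expands to
`B Rx S + ε B = S` for `B = G Ry⁻¹ H`; multiplying on the right by `S⁻¹` exhibits
`ε S⁻¹ + Rx` as a right inverse of `B`. -/
theorem inv_mul_inv_add_smul_mul [Fintype m] [Fintype n] [DecidableEq m] [DecidableEq n]
    [CommRing K] (G : Matrix m n K) (H : Matrix n m K) (Rx : Matrix m m K) (Rn : Matrix n n K)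
    (ε : K) (hRy : IsUnit (H * Rx * G + ε • Rn)) (hRn : IsUnit Rn)
    (hS : IsUnit (G * Rn⁻¹ * H)) :
    (G * (H * Rx * G + ε • Rn)⁻¹ * H)⁻¹ = ε • (G * Rn⁻¹ * H)⁻¹ + Rx := by
  rw [isUnit_iff_isUnit_det] at hRy hRn hS
  set Ry := H * Rx * G + ε • Rn with hRy_def
  set S := G * Rn⁻¹ * H
  set B := G * Ry⁻¹ * H
  have key : B * Rx * S + ε • B = S := by
    calc B * Rx * S + ε • B = G * Ry⁻¹ * Ry * (Rn⁻¹ * H) := by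
          simp only [B, S, hRy_def, Matrix.mul_add, Matrix.add_mul, Matrix.mul_smul,
            Matrix.smul_mul, Matrix.mul_assoc, mul_nonsing_inv_cancel_left _ _ hRn]
      _ = S := by rw [nonsing_inv_mul_cancel_right _ _ hRy, ← Matrix.mul_assoc]
  refine inv_eq_right_inv ?_
  calc B * (ε • S⁻¹ + Rx) = (B * Rx * S + ε • B) * S⁻¹ := by
        rw [Matrix.add_mul, mul_nonsing_inv_cancel_right _ _ hS, Matrix.smul_mul,
          Matrix.mul_add, Matrix.mul_smul, add_comm]
    _ = 1 := by rw [key, mul_nonsing_inv _ hS]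

end Matrix

open Matrix

theorem stmt0 {n m : ℕ} (H : Matrix (Fin n) (Fin m) ℝ)
    (Rx : Matrix (Fin m) (Fin m) ℝ) (Rn Ry : Matrix (Fin n) (Fin n) ℝ)
    (hH : H.rank = m) (hRx : Rx.PosDef) (hRn : Rn.PosDef)
    (ε : ℝ) (hε : 0 < ε) (hRy : Ry = H * Rx * Hᵀ + ε • Rn) :
    (Hᵀ * Ry⁻¹ * H)⁻¹ = ε • (Hᵀ * Rn⁻¹ * H)⁻¹ + Rx := by
  have hH_inj : Function.Injective H.mulVec :=
    H.mulVec_injective_of_rank_eq_card (by simpa using hH)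
  have hRy_pos : (H * Rx * Hᵀ + ε • Rn).PosDef := by
    simpa using PosDef.posSemidef_add (hRx.posSemidef.mul_mul_conjTranspose_same H) (hRn.smul hε)
  have hS_pos : (Hᵀ * Rn⁻¹ * H).PosDef := by
    simpa using hRn.inv.conjTranspose_mul_mul_same hH_inj
  subst hRy
  exact inv_mul_inv_add_smul_mul Hᵀ H Rx Rn ε hRy_pos.isUnit hRn.isUnit hS_pos.isUnit
end

section
/- Let H be a real n×m matrix of rank m, R_x and R_n positive definite, ε > 0, R_y = H R_x Hᵀ + ε R_n, and W_BLUE = (Hᵀ R_y⁻¹ H)⁻¹ Hᵀ R_y⁻¹. Then (Hᵀ R_y⁻¹ H)⁻¹ Hᵀ R_y⁻¹ = (Hᵀ R_n⁻¹ H)⁻¹ Hᵀ R_n⁻¹, i.e., the two expressions for the stochastic BLUE estimator coincide. -/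
/-! Multiplying `Hᵀ Rn⁻¹` on the right by `Ry = H Rx Hᵀ + ε Rn` gives `M Hᵀ` with
`M = Hᵀ Rn⁻¹ H Rx + ε I`, so `Hᵀ Ry⁻¹ = M⁻¹ Hᵀ Rn⁻¹`. The matrix `M = (Hᵀ Rn⁻¹ H + ε Rx⁻¹) Rx` is
invertible, and an invertible left factor of the weight `Hᵀ W` cancels in `(Hᵀ W H)⁻¹ Hᵀ W`. -/

open Matrix

namespace Matrix

variable {ι κ : Type*} [Fintype ι] [Fintype κ]

theorem posDef_mul_mul_transpose_add_smul {A : Matrix ι ι ℝ} {R : Matrix κ κ ℝ}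
    (hA : A.PosSemidef) (hR : R.PosDef) (H : Matrix κ ι ℝ) {ε : ℝ} (hε : 0 < ε) :
    (H * A * Hᵀ + ε • R).PosDef := by
  simpa using PosDef.posSemidef_add (hA.mul_mul_conjTranspose_same H) (hR.smul hε)

variable [DecidableEq ι]

open scoped ComplexOrder in
theorem isUnit_mul_add_smul_one {𝕜 : Type*} [RCLike 𝕜] {A R : Matrix ι ι 𝕜}
    (hA : A.PosSemidef) (hR : R.PosDef) {ε : 𝕜} (hε : 0 < ε) : IsUnit (A * R + ε • 1) := by
  have h : A * R + ε • 1 = (A + ε • R⁻¹) * R := by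
    rw [Matrix.add_mul, Matrix.smul_mul,
      nonsing_inv_mul _ ((isUnit_iff_isUnit_det R).mp hR.isUnit)]
  rw [h]
  exact (PosDef.posSemidef_add hA (hR.inv.smul hε)).isUnit.mul hR.isUnit

theorem mul_inv_eq_mul_mul_inv_of_eq_mul_mul_add_smul [DecidableEq κ] {α : Type*} [CommRing α]
    {G : Matrix ι κ α} {H : Matrix κ ι α} {Rx : Matrix ι ι α} {Rn Ry : Matrix κ κ α} {ε : α}
    (hRy : Ry = H * Rx * G + ε • Rn) (hRn : IsUnit Rn) (hRy' : IsUnit Ry) :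
    G * Rn⁻¹ = (G * Rn⁻¹ * H * Rx + ε • 1) * (G * Ry⁻¹) := by
  have h : G * Rn⁻¹ * Ry = (G * Rn⁻¹ * H * Rx + ε • 1) * G := by
    rw [hRy, Matrix.mul_add, Matrix.mul_smul, Matrix.mul_assoc _ Rn⁻¹ Rn,
      nonsing_inv_mul _ ((isUnit_iff_isUnit_det Rn).mp hRn)]
    simp only [Matrix.mul_assoc, Matrix.add_mul, Matrix.smul_mul, Matrix.mul_one, Matrix.one_mul]
  rw [← Matrix.mul_assoc, ← h, Matrix.mul_assoc,
    mul_nonsing_inv _ ((isUnit_iff_isUnit_det Ry).mp hRy'), Matrix.mul_one]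

theorem inv_mul_mul_cancel_left_of_isUnit {α : Type*} [CommRing α] {N : Matrix ι ι α}
    (hN : IsUnit N) (B : Matrix ι κ α) (H : Matrix κ ι α) :
    (N * B * H)⁻¹ * (N * B) = (B * H)⁻¹ * B := by
  rw [Matrix.mul_assoc N B H, mul_inv_rev, Matrix.mul_assoc, ← Matrix.mul_assoc N⁻¹,
    nonsing_inv_mul _ ((isUnit_iff_isUnit_det N).mp hN), Matrix.one_mul]

end Matrix

theorem stmt1_general {n m : ℕ} (H : Matrix (Fin n) (Fin m) ℝ)
    (Rx : Matrix (Fin m) (Fin m) ℝ) (Rn Ry : Matrix (Fin n) (Fin n) ℝ)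
    (hRx : Rx.PosDef) (hRn : Rn.PosDef)
    (ε : ℝ) (hε : 0 < ε) (hRy : Ry = H * Rx * Hᵀ + ε • Rn) :
    (Hᵀ * Ry⁻¹ * H)⁻¹ * (Hᵀ * Ry⁻¹) = (Hᵀ * Rn⁻¹ * H)⁻¹ * (Hᵀ * Rn⁻¹) := by
  set M := Hᵀ * Rn⁻¹ * H * Rx + ε • 1
  have hRyUnit : IsUnit Ry :=
    hRy ▸ (posDef_mul_mul_transpose_add_smul hRx.posSemidef hRn H hε).isUnit
  have hMUnit : IsUnit M := by
    refine isUnit_mul_add_smul_one ?_ hRx hε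
    simpa using hRn.inv.posSemidef.conjTranspose_mul_mul_same H
  have hRyInv : Hᵀ * Ry⁻¹ = M⁻¹ * (Hᵀ * Rn⁻¹) := by
    rw [mul_inv_eq_mul_mul_inv_of_eq_mul_mul_add_smul hRy hRn.isUnit hRyUnit,
      ← Matrix.mul_assoc,
      nonsing_inv_mul _ ((isUnit_iff_isUnit_det M).mp hMUnit), Matrix.one_mul]
  rw [hRyInv, inv_mul_mul_cancel_left_of_isUnit (isUnit_nonsing_inv_iff.mpr hMUnit)]

theorem stmt1 {n m : ℕ} (H : Matrix (Fin n) (Fin m) ℝ)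
    (Rx : Matrix (Fin m) (Fin m) ℝ) (Rn Ry : Matrix (Fin n) (Fin n) ℝ)
    (hH : H.rank = m) (hRx : Rx.PosDef) (hRn : Rn.PosDef)
    (ε : ℝ) (hε : 0 < ε) (hRy : Ry = H * Rx * Hᵀ + ε • Rn) :
    (Hᵀ * Ry⁻¹ * H)⁻¹ * (Hᵀ * Ry⁻¹) = (Hᵀ * Rn⁻¹ * H)⁻¹ * (Hᵀ * Rn⁻¹) :=
  stmt1_general H Rx Rn Ry hRx hRn ε hε hRy
end

section
/- Under the same assumptions, the matrix K := (Hᵀ R_y⁻¹ H)⁻¹ − 2 R_x equals ε (Hᵀ R_n⁻¹ H)⁻¹ − R_x. -/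
open Matrix

/-!
Put `N = ε R_n` and `A = Hᵀ N⁻¹ H`. Then `R_y N⁻¹ H = H (R_x A + 1) = H (R_x + A⁻¹) A`, so
`Hᵀ R_y⁻¹ H (R_x + A⁻¹) A = A`, i.e. `(Hᵀ R_y⁻¹ H)⁻¹ = R_x + A⁻¹ = R_x + ε (Hᵀ R_n⁻¹ H)⁻¹`.
Full column rank of `H` makes `A` positive definite, hence invertible.
-/

theorem Matrix.mulVec_injective_of_rank_eq_card_width {m n R : Type*} [Fintype n] [Field R]
    (A : Matrix m n R) (hA : A.rank = Fintype.card n) : Function.Injective A.mulVec := by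
  have hker : Module.finrank R (LinearMap.ker A.mulVecLin) = 0 := by
    have := A.mulVecLin.finrank_range_add_finrank_ker
    rw [← Matrix.rank, hA, Module.finrank_fintype_fun_eq_card] at this
    omega
  rw [← Matrix.coe_mulVecLin, ← LinearMap.ker_eq_bot]
  exact Submodule.finrank_eq_zero.mp hker

theorem Matrix.inv_smul_of_ne_zero {n K : Type*} [Fintype n] [DecidableEq n] [Field K]
    (M : Matrix n n K) {c : K} (hc : c ≠ 0) : (c • M)⁻¹ = c⁻¹ • M⁻¹ := by
  by_cases hM : IsUnit M.det
  · exact inv_smul' M (Units.mk0 c hc) hM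
  · have hcM : ¬IsUnit (c • M).det := by
      simpa [det_smul, isUnit_iff_ne_zero, hc] using hM
    rw [nonsing_inv_apply_not_isUnit _ hM, nonsing_inv_apply_not_isUnit _ hcM, smul_zero]

theorem Matrix.inv_mul_inv_add_mul_eq_add_inv {m n α : Type*} [Fintype m] [Fintype n]
    [DecidableEq m] [DecidableEq n] [CommRing α]
    (G : Matrix m n α) (H : Matrix n m α) (P : Matrix m m α) (N : Matrix n n α)
    (hS : IsUnit (H * P * G + N)) (hN : IsUnit N) (hA : IsUnit (G * N⁻¹ * H)) :
    (G * (H * P * G + N)⁻¹ * H)⁻¹ = P + (G * N⁻¹ * H)⁻¹ := by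
  rw [isUnit_iff_isUnit_det] at hS hN hA
  set S := H * P * G + N
  set A := G * N⁻¹ * H
  have hSNH : S * (N⁻¹ * H) = H * (P + A⁻¹) * A := by
    rw [Matrix.mul_assoc H, Matrix.add_mul P, nonsing_inv_mul _ hA]
    simp only [S, A, Matrix.add_mul, Matrix.mul_add, Matrix.mul_assoc, Matrix.mul_one,
      mul_nonsing_inv_cancel_left _ _ hN]
  have hNH : N⁻¹ * H = S⁻¹ * H * (P + A⁻¹) * A := by
    rw [Matrix.mul_assoc, Matrix.mul_assoc, ← Matrix.mul_assoc H, ← hSNH,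
      nonsing_inv_mul_cancel_left _ _ hS]
  refine inv_eq_right_inv ?_
  calc G * S⁻¹ * H * (P + A⁻¹) = G * S⁻¹ * H * (P + A⁻¹) * A * A⁻¹ := by
        rw [Matrix.mul_assoc _ A, mul_nonsing_inv _ hA, Matrix.mul_one]
    _ = G * (S⁻¹ * H * (P + A⁻¹) * A) * A⁻¹ := by simp only [Matrix.mul_assoc]
    _ = A * A⁻¹ := by rw [← hNH, ← Matrix.mul_assoc]
    _ = 1 := mul_nonsing_inv _ hA

theorem stmt2 {n m : ℕ} (H : Matrix (Fin n) (Fin m) ℝ)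
    (Rx : Matrix (Fin m) (Fin m) ℝ) (Rn Ry : Matrix (Fin n) (Fin n) ℝ)
    (hH : H.rank = m) (hRx : Rx.PosDef) (hRn : Rn.PosDef)
    (ε : ℝ) (hε : 0 < ε) (hRy : Ry = H * Rx * Hᵀ + ε • Rn)
    (K : Matrix (Fin m) (Fin m) ℝ)
    (hK : K = (Hᵀ * Ry⁻¹ * H)⁻¹ - (2 : ℝ) • Rx) :
    K = ε • (Hᵀ * Rn⁻¹ * H)⁻¹ - Rx := by
  have hHt : Hᵀ = Hᴴ := (conjTranspose_eq_transpose_of_trivial H).symm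
  have hN : (ε • Rn).PosDef := hRn.smul hε
  have hRyPD : Ry.PosDef := by
    rw [hRy, hHt]
    exact PosDef.posSemidef_add (hRx.posSemidef.mul_mul_conjTranspose_same H) hN
  have hA : (Hᵀ * (ε • Rn)⁻¹ * H).PosDef := by
    rw [hHt]
    exact hN.inv.conjTranspose_mul_mul_same
      (H.mulVec_injective_of_rank_eq_card_width (by rw [hH, Fintype.card_fin]))
  have hInv : (Hᵀ * Ry⁻¹ * H)⁻¹ = Rx + (Hᵀ * (ε • Rn)⁻¹ * H)⁻¹ := by
    subst hRy
    exact inv_mul_inv_add_mul_eq_add_inv _ _ _ _ hRyPD.isUnit hN.isUnit hA.isUnit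
  have hScale : (Hᵀ * (ε • Rn)⁻¹ * H)⁻¹ = ε • (Hᵀ * Rn⁻¹ * H)⁻¹ := by
    rw [inv_smul_of_ne_zero _ hε.ne', Matrix.mul_smul, Matrix.smul_mul,
      inv_smul_of_ne_zero _ (inv_ne_zero hε.ne'), inv_inv]
  rw [hK, hInv, hScale]
  module
end

section
/- With the notation above, if υ_r γ_m > ε > υ_{r+1} γ₁ for some 1 ≤ r < m, then δ_r < 0 and δ_{r+1} > 0; consequently r = max{ s : δ_s < 0 }. -/
/-!
A min–max argument. Write every quadratic form in its own orthonormal eigenbasis. A dimension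
count gives a nonzero `x` whose `P`-coordinates vanish beyond index `j` and whose `K`-coordinates
vanish before `j`; for it `δ_j ‖x‖² ≤ xᵀKx = ε xᵀP⁻¹x - xᵀRₓx ≤ (ε / υ_j - γ_m) ‖x‖²`, which is
negative when `υ_j γ_m > ε`. Swapping the roles of the two index ranges gives `δ_j > 0` when
`υ_j γ_1 < ε`, and monotonicity of `δ` then locates the last negative eigenvalue.
-/

open Matrix Finset

section Orthogonal

variable {ι : Type*} [Fintype ι] [DecidableEq ι]

theorem dotProduct_mulVec_conj_diagonal {R : Type*} [CommSemiring R] (M : Matrix ι ι R)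
    (d x : ι → R) :
    x ⬝ᵥ ((M * diagonal d * Mᵀ) *ᵥ x) = ∑ i, d i * (Mᵀ *ᵥ x) i ^ 2 := by
  rw [← mulVec_mulVec, ← mulVec_mulVec, dotProduct_mulVec, ← mulVec_transpose]
  simp only [dotProduct, mulVec_diagonal]
  exact sum_congr rfl fun i _ => by ring

theorem sum_sq_transpose_mulVec {R : Type*} [CommSemiring R] {M : Matrix ι ι R}
    (hM : M * Mᵀ = 1) (x : ι → R) :
    ∑ i, (Mᵀ *ᵥ x) i ^ 2 = x ⬝ᵥ x := by
  simpa [hM] using (dotProduct_mulVec_conj_diagonal M 1 x).symm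

theorem inv_conj_diagonal {K : Type*} [Field K] {M : Matrix ι ι K} (hM : M * Mᵀ = 1)
    {d : ι → K} (hd : ∀ i, d i ≠ 0) :
    (M * diagonal d * Mᵀ)⁻¹ = M * diagonal d⁻¹ * Mᵀ := by
  have hMM : Mᵀ * M = 1 := mul_eq_one_comm.mp hM
  have hdd : diagonal d * diagonal d⁻¹ = 1 := by
    rw [diagonal_mul_diagonal, ← diagonal_one]
    exact congrArg diagonal (funext fun i => mul_inv_cancel₀ (hd i))
  apply inv_eq_right_inv
  calc M * diagonal d * Mᵀ * (M * diagonal d⁻¹ * Mᵀ)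
      = M * diagonal d * (Mᵀ * M) * diagonal d⁻¹ * Mᵀ := by simp only [Matrix.mul_assoc]
    _ = 1 := by rw [hMM, Matrix.mul_one, Matrix.mul_assoc M, hdd, Matrix.mul_one, hM]

theorem pos_of_posDef_conj_diagonal {M : Matrix ι ι ℝ} (hM : M * Mᵀ = 1) {d : ι → ℝ}
    (hP : (M * diagonal d * Mᵀ).PosDef) (i : ι) : 0 < d i := by
  have hMM : Mᵀ * M = 1 := mul_eq_one_comm.mp hM
  have hinj : Function.Injective M.mulVec := fun x y hxy => by
    simpa [mulVec_mulVec, hMM] using congrArg (Mᵀ *ᵥ ·) hxy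
  have hconj : Mᵀ * (M * diagonal d * Mᵀ) * M = diagonal d := by
    simp only [Matrix.mul_assoc, hMM, Matrix.mul_one, ← Matrix.mul_assoc Mᵀ M, Matrix.one_mul]
  have hD := hP.conjTranspose_mul_mul_same hinj
  rw [conjTranspose_eq_transpose_of_trivial, hconj] at hD
  exact posDef_diagonal_iff.mp hD i

theorem dotProduct_mulVec_conj_diagonal_le {M : Matrix ι ι ℝ} (hM : M * Mᵀ = 1)
    {d x : ι → ℝ} {c : ℝ} (h : ∀ i, (Mᵀ *ᵥ x) i ≠ 0 → d i ≤ c) :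
    x ⬝ᵥ ((M * diagonal d * Mᵀ) *ᵥ x) ≤ c * (x ⬝ᵥ x) := by
  rw [dotProduct_mulVec_conj_diagonal, ← sum_sq_transpose_mulVec hM, mul_sum]
  refine sum_le_sum fun i _ => ?_
  by_cases hi : (Mᵀ *ᵥ x) i = 0
  · simp [hi]
  · exact mul_le_mul_of_nonneg_right (h i hi) (sq_nonneg _)

theorem le_dotProduct_mulVec_conj_diagonal {M : Matrix ι ι ℝ} (hM : M * Mᵀ = 1)
    {d x : ι → ℝ} {c : ℝ} (h : ∀ i, (Mᵀ *ᵥ x) i ≠ 0 → c ≤ d i) :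
    c * (x ⬝ᵥ x) ≤ x ⬝ᵥ ((M * diagonal d * Mᵀ) *ᵥ x) := by
  rw [dotProduct_mulVec_conj_diagonal, ← sum_sq_transpose_mulVec hM, mul_sum]
  refine sum_le_sum fun i _ => ?_
  by_cases hi : (Mᵀ *ᵥ x) i = 0
  · simp [hi]
  · exact mul_le_mul_of_nonneg_right (h i hi) (sq_nonneg _)

end Orthogonal

theorem exists_ne_zero_mulVec_eq_zero_on {K ι κ μ : Type*} [Field K] [Fintype ι]
    [Fintype κ] [Fintype μ] (A : Matrix κ ι K) (B : Matrix μ ι K) (s : Finset κ)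
    (t : Finset μ) (hcard : #s + #t < Fintype.card ι) :
    ∃ x ≠ 0, (∀ i ∈ s, (A *ᵥ x) i = 0) ∧ ∀ i ∈ t, (B *ᵥ x) i = 0 := by
  let L : (ι → K) →ₗ[K] (s → K) × (t → K) :=
    ((LinearMap.funLeft K K Subtype.val).comp A.mulVecLin).prod
      ((LinearMap.funLeft K K Subtype.val).comp B.mulVecLin)
  have hL : ¬ Function.Injective L := fun hinj => by
    have := LinearMap.finrank_le_finrank_of_injective hinj
    simp only [Module.finrank_prod, Module.finrank_fintype_fun_eq_card,
      Fintype.card_coe] at this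
    omega
  rw [← LinearMap.ker_eq_bot] at hL
  obtain ⟨x, hx, hx0⟩ := Submodule.exists_mem_ne_zero_of_ne_bot hL
  exact ⟨x, hx0, fun i hi => congrFun (congrArg Prod.fst hx) ⟨i, hi⟩,
    fun i hi => congrFun (congrArg Prod.snd hx) ⟨i, hi⟩⟩

section Inertia

variable {m : ℕ} {ε c : ℝ} {υ γ δ : Fin m → ℝ} {MP NR E : Matrix (Fin m) (Fin m) ℝ}

theorem dotProduct_mulVec_eq_of_eq_sub
    (hK : E * diagonal δ * Eᵀ = ε • (MP * diagonal υ⁻¹ * MPᵀ) - NR * diagonal γ * NRᵀ)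
    (x : Fin m → ℝ) :
    x ⬝ᵥ ((E * diagonal δ * Eᵀ) *ᵥ x) =
      ε * x ⬝ᵥ ((MP * diagonal υ⁻¹ * MPᵀ) *ᵥ x) - x ⬝ᵥ ((NR * diagonal γ * NRᵀ) *ᵥ x) := by
  rw [hK, sub_mulVec, dotProduct_sub, smul_mulVec, dotProduct_smul, smul_eq_mul]

variable (hMP : MP * MPᵀ = 1) (hNR : NR * NRᵀ = 1) (hE : E * Eᵀ = 1)
  (hK : E * diagonal δ * Eᵀ = ε • (MP * diagonal υ⁻¹ * MPᵀ) - NR * diagonal γ * NRᵀ)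
  (hε : 0 ≤ ε) (hυpos : ∀ i, 0 < υ i) (hυ : Antitone υ) (hδ : Monotone δ)
include hMP hNR hE hK hε hυpos hυ hδ

theorem eigenvalue_neg_of_lt (j : Fin m) (hγ : ∀ i, c ≤ γ i) (hj : ε < υ j * c) : δ j < 0 := by
  obtain ⟨x, hx, hMPx, hEx⟩ := exists_ne_zero_mulVec_eq_zero_on MPᵀ Eᵀ (Ioi j) (Iio j)
    (by rw [Fin.card_Ioi, Fin.card_Iio, Fintype.card_fin]; omega)
  have hxx : 0 < x ⬝ᵥ x := dotProduct_star_self_pos_iff.mpr hx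
  have hKx : δ j * (x ⬝ᵥ x) ≤ x ⬝ᵥ ((E * diagonal δ * Eᵀ) *ᵥ x) :=
    le_dotProduct_mulVec_conj_diagonal hE fun i hi =>
      hδ (not_lt.mp fun hij => hi (hEx i (mem_Iio.mpr hij)))
  have hPx : x ⬝ᵥ ((MP * diagonal υ⁻¹ * MPᵀ) *ᵥ x) ≤ (υ j)⁻¹ * (x ⬝ᵥ x) :=
    dotProduct_mulVec_conj_diagonal_le hMP fun i hi =>
      inv_anti₀ (hυpos j) (hυ (not_lt.mp fun hij => hi (hMPx i (mem_Ioi.mpr hij))))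
  have hRx : c * (x ⬝ᵥ x) ≤ x ⬝ᵥ ((NR * diagonal γ * NRᵀ) *ᵥ x) :=
    le_dotProduct_mulVec_conj_diagonal hNR fun i _ => hγ i
  have hc : ε * (υ j)⁻¹ < c := by
    rwa [← div_eq_mul_inv, div_lt_iff₀ (hυpos j), mul_comm]
  rw [dotProduct_mulVec_eq_of_eq_sub hK] at hKx
  nlinarith [mul_le_mul_of_nonneg_left hPx hε]

theorem eigenvalue_pos_of_lt (j : Fin m) (hγ : ∀ i, γ i ≤ c) (hj : υ j * c < ε) : 0 < δ j := by
  obtain ⟨x, hx, hMPx, hEx⟩ := exists_ne_zero_mulVec_eq_zero_on MPᵀ Eᵀ (Iio j) (Ioi j)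
    (by rw [Fin.card_Ioi, Fin.card_Iio, Fintype.card_fin]; omega)
  have hxx : 0 < x ⬝ᵥ x := dotProduct_star_self_pos_iff.mpr hx
  have hKx : x ⬝ᵥ ((E * diagonal δ * Eᵀ) *ᵥ x) ≤ δ j * (x ⬝ᵥ x) :=
    dotProduct_mulVec_conj_diagonal_le hE fun i hi =>
      hδ (not_lt.mp fun hij => hi (hEx i (mem_Ioi.mpr hij)))
  have hPx : (υ j)⁻¹ * (x ⬝ᵥ x) ≤ x ⬝ᵥ ((MP * diagonal υ⁻¹ * MPᵀ) *ᵥ x) :=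
    le_dotProduct_mulVec_conj_diagonal hMP fun i hi =>
      inv_anti₀ (hυpos i) (hυ (not_lt.mp fun hij => hi (hMPx i (mem_Iio.mpr hij))))
  have hRx : x ⬝ᵥ ((NR * diagonal γ * NRᵀ) *ᵥ x) ≤ c * (x ⬝ᵥ x) :=
    dotProduct_mulVec_conj_diagonal_le hNR fun i _ => hγ i
  have hc : c < ε * (υ j)⁻¹ := by
    rwa [← div_eq_mul_inv, lt_div_iff₀ (hυpos j), mul_comm]
  rw [dotProduct_mulVec_eq_of_eq_sub hK] at hKx
  nlinarith [mul_le_mul_of_nonneg_left hPx hε]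

end Inertia

theorem stmt6 {m : ℕ} (P Rx K : Matrix (Fin m) (Fin m) ℝ)
    (hP : P.PosDef) (ε : ℝ) (hε : 0 < ε)
    (r : ℕ) (hrm : r < m)
    (υ γ δ : Fin m → ℝ)
    (MP NR E : Matrix (Fin m) (Fin m) ℝ)
    (hMP : MP * MPᵀ = 1) (hPeq : P = MP * Matrix.diagonal υ * MPᵀ)
    (hυ : Antitone υ)
    (hNR : NR * NRᵀ = 1) (hRxeq : Rx = NR * Matrix.diagonal γ * NRᵀ)
    (hγ : Antitone γ)
    (hK : K = ε • P⁻¹ - Rx)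
    (hE : E * Eᵀ = 1) (hKeq : K = E * Matrix.diagonal δ * Eᵀ)
    (hδ : Monotone δ)
    (hupper : υ ⟨r - 1, by omega⟩ * γ ⟨m - 1, by omega⟩ > ε)
    (hlower : ε > υ ⟨r, hrm⟩ * γ ⟨0, by omega⟩) :
    δ ⟨r - 1, by omega⟩ < 0 ∧ 0 < δ ⟨r, hrm⟩ ∧
      ∀ s : Fin m, δ s < 0 → (s : ℕ) < r := by
  have hυpos : ∀ i, 0 < υ i := pos_of_posDef_conj_diagonal hMP (hPeq ▸ hP)
  have hKdiag : E * diagonal δ * Eᵀ = ε • (MP * diagonal υ⁻¹ * MPᵀ) - NR * diagonal γ * NRᵀ := by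
    rw [← hKeq, hK, hPeq, inv_conj_diagonal hMP fun i => (hυpos i).ne', hRxeq]
  have hneg := eigenvalue_neg_of_lt hMP hNR hE hKdiag hε.le hυpos hυ hδ _
    (fun i => hγ (Fin.le_def.mpr (by simp; omega))) hupper
  have hpos := eigenvalue_pos_of_lt hMP hNR hE hKdiag hε.le hυpos hυ hδ _
    (fun i => hγ (Fin.le_def.mpr (Nat.zero_le _))) hlower
  refine ⟨hneg, hpos, fun s hs => ?_⟩
  by_contra! hrs
  exact (hpos.trans_le (hδ (Fin.le_def.mpr hrs))).not_gt hs
end
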